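/- arXiv:2209.15538 — 7 statements merged into one kernel-verified Lean document; each statement's English description precedes it below -/
import Mathlib

section
/- For every natural number s with s ≤ r + 1 and every integer p, the submodule N s p is contained in Z s p. In particular the quotient module E_s^p := Z s p / N s p (the p-th piece of the s-th page of the spectral sequence of the curved filtered complex (V, F, d)) is well defined. The essential content is: for every y ∈ F (p − s + 1) with d y ∈ F p, one has d (d y) ∈ F (p + s). -/
/-- For a curved filtered complex `(V, F, d)` with curvature `ω ∈ F (2r+1)`
(where `d ∘ d = -b ω ·` for a filtration-compatible bilinear map `b`), for every `s ≤ r + 1`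
and every `p : ℤ` the submodule `N s p` is contained in `Z s p`, so the page
`E_s^p = Z s p / N s p` is well defined.  The essential content: for every
`y ∈ F (p - s + 1)` with `d y ∈ F p` one has `d (d y) ∈ F (p + s)`. -/
theorem spectral_page_well_defined
    {R V : Type*} [CommRing R] [AddCommGroup V] [Module R V]
    (F : ℤ → Submodule R V) (hF : Antitone F)
    (hFtop : ∀ j : ℤ, j ≤ 1 → F j = ⊤)
    (r : ℕ)
    (d : V →ₗ[R] V) (hd : ∀ (p : ℤ), ∀ x ∈ F p, d x ∈ F p)
    (b : V →ₗ[R] V →ₗ[R] V)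
    (hb : ∀ (p q : ℤ), ∀ x ∈ F p, ∀ y ∈ F q, b x y ∈ F (p + q))
    (ω : V) (hω : ω ∈ F (2 * (r : ℤ) + 1))
    (hdd : ∀ x : V, d (d x) = - b ω x)
    (Z N : ℕ → ℤ → Submodule R V)
    (hZ : ∀ (s : ℕ) (p : ℤ), Z s p = F p ⊓ (F (p + (s : ℤ))).comap d)
    (hN : ∀ (s : ℕ) (p : ℤ), N s p =
      (F (p + 1) ⊓ (F (p + (s : ℤ))).comap d) +
        ((F (p - (s : ℤ) + 1)).map d ⊓ F p)) :
    ∀ s : ℕ, s ≤ r + 1 → ∀ p : ℤ,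
      N s p ≤ Z s p ∧
      ∀ y ∈ F (p - (s : ℤ) + 1), d y ∈ F p → d (d y) ∈ F (p + (s : ℤ)) := by
  intro s hs p
  have key : ∀ y ∈ F (p - (s : ℤ) + 1), d y ∈ F p → d (d y) ∈ F (p + (s : ℤ)) := by
    intro y hy _
    rw [hdd]
    have hb' := hb _ _ ω hω y hy
    have hle : F (2 * (r : ℤ) + 1 + (p - (s : ℤ) + 1)) ≤ F (p + (s : ℤ)) := by
      apply hF
      have : (s : ℤ) ≤ (r : ℤ) + 1 := by exact_mod_cast hs
      linarith
    exact neg_mem (hle hb')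
  refine ⟨?_, key⟩
  rw [hZ, hN]
  apply sup_le
  · refine le_inf (le_trans inf_le_left (hF (by linarith))) inf_le_right
  · intro x hx
    obtain ⟨⟨y, hy, rfl⟩, hx2⟩ := hx
    exact ⟨hx2, key y hy hx2⟩
end

section
/- For every natural number s with s ≤ r and every integer p, the map d satisfies d(Z s p) ⊆ Z s (p + s) and d(N s p) ⊆ N s (p + s). Consequently d induces a well-defined R-linear map d_s : E_s^p → E_s^{p+s} on the quotient modules E_s^p := Z s p / N s p. -/
/-- For a curved filtered complex `(V, F, d)` with curvature `ω ∈ F (2r+1)`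
(where `d ∘ d = -b ω ·` for a filtration-compatible bilinear map `b`), for every `s ≤ r`
and every `p : ℤ`, the map `d` satisfies `d (Z s p) ⊆ Z s (p+s)` and `d (N s p) ⊆ N s (p+s)`;
consequently `d` induces a well-defined `R`-linear map `d_s` on the pages
`E_s^p = Z s p / N s p`. -/
theorem spectral_differential_well_defined
    {R V : Type*} [CommRing R] [AddCommGroup V] [Module R V]
    (F : ℤ → Submodule R V) (hF : Antitone F)
    (hFtop : ∀ j : ℤ, j ≤ 1 → F j = ⊤)
    (r : ℕ)
    (d : V →ₗ[R] V) (hd : ∀ (p : ℤ), ∀ x ∈ F p, d x ∈ F p)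
    (b : V →ₗ[R] V →ₗ[R] V)
    (hb : ∀ (p q : ℤ), ∀ x ∈ F p, ∀ y ∈ F q, b x y ∈ F (p + q))
    (ω : V) (hω : ω ∈ F (2 * (r : ℤ) + 1))
    (hdd : ∀ x : V, d (d x) = - b ω x)
    (Z N : ℕ → ℤ → Submodule R V)
    (hZ : ∀ (s : ℕ) (p : ℤ), Z s p = F p ⊓ (F (p + (s : ℤ))).comap d)
    (hN : ∀ (s : ℕ) (p : ℤ), N s p =
      (F (p + 1) ⊓ (F (p + (s : ℤ))).comap d) +
        ((F (p - (s : ℤ) + 1)).map d ⊓ F p)) :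
    ∀ s : ℕ, s ≤ r → ∀ p : ℤ,
      (∀ x ∈ Z s p, d x ∈ Z s (p + (s : ℤ))) ∧
      (∀ x ∈ N s p, d x ∈ N s (p + (s : ℤ))) := by
  intro s hs p
  have hsr : (s : ℤ) ≤ r := by exact_mod_cast hs
  constructor
  · intro x hx
    rw [hZ] at hx
    rw [hZ]
    obtain ⟨hx1, hx2⟩ := hx
    refine ⟨hx2, ?_⟩
    show d (d x) ∈ F (p + (s:ℤ) + s)
    rw [hdd]
    exact neg_mem (hF (by linarith) (hb _ _ ω hω x hx1))
  · intro x hx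
    rw [hN] at hx
    rw [hN]
    rw [Submodule.add_eq_sup, Submodule.mem_sup] at hx
    obtain ⟨a, ha, c, hc, rfl⟩ := hx
    obtain ⟨ha1, ha2⟩ := ha

    obtain ⟨hc1, hc2⟩ := hc
    obtain ⟨y, hy, rfl⟩ := hc1
    rw [map_add, Submodule.add_eq_sup, Submodule.mem_sup]
    refine ⟨d (d y), ⟨?_, ?_⟩, d a, ⟨?_, ha2⟩, add_comm _ _⟩
    · rw [hdd]
      exact hF (by linarith) (neg_mem (hb _ _ ω hω y hy))
    · show d (d (d y)) ∈ F (p + (s:ℤ) + s)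
      rw [hdd]
      exact hF (by linarith) (neg_mem (hb _ _ ω hω (d y) hc2))
    · refine Submodule.mem_map.mpr ⟨a, ?_, rfl⟩
      have : p + (s : ℤ) - s + 1 = p + 1 := by ring
      rw [this]
      exact ha1
end

section
/- For every natural number s with s ≤ r, every integer p, and every x ∈ Z s p, one has d (d x) ∈ N s (p + 2s). Consequently the induced map d_s on the s-th page squares to zero: the composite E_s^p → E_s^{p+s} → E_s^{p+2s} of the maps induced by d is the zero map. (Concretely: for x ∈ F p with d x ∈ F (p + s), one has d(d x) ∈ F (p + 2s + 1) and d(d(d x)) ∈ F (p + 3s + 1).) -/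
/-- For a curved filtered complex `(V, F, d)` with curvature `ω ∈ F (2r+1)`
(where `d ∘ d = -b ω ·`), for every `s ≤ r`, every `p : ℤ` and every `x ∈ Z s p` one has
`d (d x) ∈ N s (p + 2s)`; consequently the composite
`E_s^p → E_s^{p+s} → E_s^{p+2s}` of the maps induced by `d` on the pages
`E_s^q = Z s q / N s q` is zero.  Concretely: for `x ∈ F p` with `d x ∈ F (p+s)` one has
`d (d x) ∈ F (p + 2s + 1)` and `d (d (d x)) ∈ F (p + 3s + 1)`. -/
theorem spectral_differential_squares_to_zero
    {R V : Type*} [CommRing R] [AddCommGroup V] [Module R V]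
    (F : ℤ → Submodule R V) (hF : Antitone F)
    (hFtop : ∀ j : ℤ, j ≤ 1 → F j = ⊤)
    (r : ℕ)
    (d : V →ₗ[R] V) (hd : ∀ (p : ℤ), ∀ x ∈ F p, d x ∈ F p)
    (b : V →ₗ[R] V →ₗ[R] V)
    (hb : ∀ (p q : ℤ), ∀ x ∈ F p, ∀ y ∈ F q, b x y ∈ F (p + q))
    (ω : V) (hω : ω ∈ F (2 * (r : ℤ) + 1))
    (hdd : ∀ x : V, d (d x) = - b ω x)
    (Z N : ℕ → ℤ → Submodule R V)
    (hZ : ∀ (s : ℕ) (p : ℤ), Z s p = F p ⊓ (F (p + (s : ℤ))).comap d)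
    (hN : ∀ (s : ℕ) (p : ℤ), N s p =
      (F (p + 1) ⊓ (F (p + (s : ℤ))).comap d) +
        ((F (p - (s : ℤ) + 1)).map d ⊓ F p)) :
    ∀ s : ℕ, s ≤ r → ∀ p : ℤ,
      (∀ x ∈ Z s p, d (d x) ∈ N s (p + 2 * (s : ℤ))) ∧
      (∀ (D1 : (Z s p ⧸ ((N s p).comap (Z s p).subtype)) →ₗ[R]
            (Z s (p + (s : ℤ)) ⧸ ((N s (p + (s : ℤ))).comap (Z s (p + (s : ℤ))).subtype)))
         (D2 : (Z s (p + (s : ℤ)) ⧸ ((N s (p + (s : ℤ))).comap (Z s (p + (s : ℤ))).subtype)) →ₗ[R]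
            (Z s (p + 2 * (s : ℤ)) ⧸ ((N s (p + 2 * (s : ℤ))).comap (Z s (p + 2 * (s : ℤ))).subtype))),
        (∀ (x : V) (hx : x ∈ Z s p) (hdx : d x ∈ Z s (p + (s : ℤ))),
            D1 (Submodule.Quotient.mk ⟨x, hx⟩) = Submodule.Quotient.mk ⟨d x, hdx⟩) →
        (∀ (x : V) (hx : x ∈ Z s (p + (s : ℤ))) (hdx : d x ∈ Z s (p + 2 * (s : ℤ))),
            D2 (Submodule.Quotient.mk ⟨x, hx⟩) = Submodule.Quotient.mk ⟨d x, hdx⟩) →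
        D2 ∘ₗ D1 = 0) ∧
      (∀ x ∈ F p, d x ∈ F (p + (s : ℤ)) →
        d (d x) ∈ F (p + 2 * (s : ℤ) + 1) ∧ d (d (d x)) ∈ F (p + 3 * (s : ℤ) + 1)) := by
  intro s hs p
  have hsr : (s : ℤ) ≤ r := by exact_mod_cast hs
  have key : ∀ x ∈ F p, d x ∈ F (p + (s : ℤ)) →
      d (d x) ∈ F (p + 2 * (s : ℤ) + 1) ∧ d (d (d x)) ∈ F (p + 3 * (s : ℤ) + 1) := by
    intro x hx hdx
    constructor
    · have h1 : b ω x ∈ F (2 * (r : ℤ) + 1 + p) := hb _ _ ω hω x hx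
      have h2 := hF (show p + 2 * (s : ℤ) + 1 ≤ 2 * (r : ℤ) + 1 + p by linarith) h1
      rw [hdd]; exact neg_mem h2
    · have h1 : b ω (d x) ∈ F (2 * (r : ℤ) + 1 + (p + (s : ℤ))) := hb _ _ ω hω _ hdx
      have h2 := hF (show p + 3 * (s : ℤ) + 1 ≤ 2 * (r : ℤ) + 1 + (p + (s : ℤ)) by linarith) h1
      rw [hdd]; exact neg_mem h2
  have mem_dd : ∀ x ∈ Z s p, d (d x) ∈ N s (p + 2 * (s : ℤ)) := by
    intro x hx
    rw [hZ] at hx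
    obtain ⟨hx1, hx2⟩ := hx
    obtain ⟨hA, hB⟩ := key x hx1 hx2
    rw [hN]
    apply Submodule.mem_sup_left
    refine ⟨hA, ?_⟩
    exact hF (show p + 2 * (s : ℤ) + (s : ℤ) ≤ p + 3 * (s : ℤ) + 1 by linarith) hB
  refine ⟨mem_dd, ?_, key⟩
  intro D1 D2 h1 h2
  apply LinearMap.ext
  intro q
  obtain ⟨z, rfl⟩ := Submodule.Quotient.mk_surjective _ q
  obtain ⟨x, hx⟩ := z
  have hx' := hx
  rw [hZ] at hx'
  obtain ⟨hx1, hx2⟩ := hx'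
  obtain ⟨hA, hB⟩ := key x hx1 hx2
  have hdx : d x ∈ Z s (p + (s : ℤ)) := by
    rw [hZ]
    exact ⟨hx2, hF (show p + (s : ℤ) + (s : ℤ) ≤ p + 2 * (s : ℤ) + 1 by linarith) hA⟩
  have hddx : d (d x) ∈ Z s (p + 2 * (s : ℤ)) := by
    rw [hZ]
    exact ⟨hF (show p + 2 * (s : ℤ) ≤ p + 2 * (s : ℤ) + 1 by linarith) hA,
      hF (show p + 2 * (s : ℤ) + (s : ℤ) ≤ p + 3 * (s : ℤ) + 1 by linarith) hB⟩
  simp only [LinearMap.comp_apply, LinearMap.zero_apply]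
  rw [h1 x hx hdx, h2 (d x) hdx hddx]
  rw [Submodule.Quotient.mk_eq_zero]
  exact Submodule.mem_comap.mpr (mem_dd x hx)
end

section
/- For every natural number s with s ≤ r and every integer p, let d_s : E_s^q → E_s^{q+s} denote the R-linear map induced by d on the quotients E_s^q := Z s q / N s q (which is well defined since d(Z s q) ⊆ Z s (q+s) and d(N s q) ⊆ N s (q+s)). Then the inclusion Z (s+1) p ⊆ Z s p induces an R-linear isomorphism E_{s+1}^p ≅ ker(d_s : E_s^p → E_s^{p+s}) / range(d_s : E_s^{p−s} → E_s^p); that is, the (s+1)-st page of the spectral sequence is isomorphic to the homology of the s-th page. -/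
set_option maxHeartbeats 1000000


/-- For a curved filtered complex `(V, F, d)` with curvature `ω ∈ F (2r+1)`
(where `d ∘ d = -b ω ·`), for every `s ≤ r` and `p : ℤ`, if `D1 : E_s^p → E_s^{p+s}` and
`D2 : E_s^{p-s} → E_s^p` denote the `R`-linear maps induced by `d` on the pages
`E_s^q = Z s q / N s q`, then the inclusion `Z (s+1) p ⊆ Z s p` induces an `R`-linear
isomorphism `E_{s+1}^p ≅ ker D1 / range D2`: the `(s+1)`-st page is the homology of the
`s`-th page. -/
theorem spectral_next_page_is_homology
    {R V : Type*} [CommRing R] [AddCommGroup V] [Module R V]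
    (F : ℤ → Submodule R V) (hF : Antitone F)
    (hFtop : ∀ j : ℤ, j ≤ 1 → F j = ⊤)
    (r : ℕ)
    (d : V →ₗ[R] V) (hd : ∀ (p : ℤ), ∀ x ∈ F p, d x ∈ F p)
    (b : V →ₗ[R] V →ₗ[R] V)
    (hb : ∀ (p q : ℤ), ∀ x ∈ F p, ∀ y ∈ F q, b x y ∈ F (p + q))
    (ω : V) (hω : ω ∈ F (2 * (r : ℤ) + 1))
    (hdd : ∀ x : V, d (d x) = - b ω x)
    (Z N : ℕ → ℤ → Submodule R V)
    (hZ : ∀ (s : ℕ) (p : ℤ), Z s p = F p ⊓ (F (p + (s : ℤ))).comap d)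
    (hN : ∀ (s : ℕ) (p : ℤ), N s p =
      (F (p + 1) ⊓ (F (p + (s : ℤ))).comap d) +
        ((F (p - (s : ℤ) + 1)).map d ⊓ F p))
    (s : ℕ) (hs : s ≤ r) (p : ℤ)
    (D1 : (Z s p ⧸ ((N s p).comap (Z s p).subtype)) →ₗ[R]
        (Z s (p + (s : ℤ)) ⧸ ((N s (p + (s : ℤ))).comap (Z s (p + (s : ℤ))).subtype)))
    (hD1 : ∀ (x : V) (hx : x ∈ Z s p) (hdx : d x ∈ Z s (p + (s : ℤ))),
        D1 (Submodule.Quotient.mk ⟨x, hx⟩) = Submodule.Quotient.mk ⟨d x, hdx⟩)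
    (D2 : (Z s (p - (s : ℤ)) ⧸ ((N s (p - (s : ℤ))).comap (Z s (p - (s : ℤ))).subtype)) →ₗ[R]
        (Z s p ⧸ ((N s p).comap (Z s p).subtype)))
    (hD2 : ∀ (x : V) (hx : x ∈ Z s (p - (s : ℤ))) (hdx : d x ∈ Z s p),
        D2 (Submodule.Quotient.mk ⟨x, hx⟩) = Submodule.Quotient.mk ⟨d x, hdx⟩) :
    ∃ e : (Z (s + 1) p ⧸ ((N (s + 1) p).comap (Z (s + 1) p).subtype)) ≃ₗ[R]
        (LinearMap.ker D1 ⧸ ((LinearMap.range D2).comap (LinearMap.ker D1).subtype)),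
      ∀ (x : V) (hx1 : x ∈ Z (s + 1) p) (hx : x ∈ Z s p)
        (hk : (Submodule.Quotient.mk ⟨x, hx⟩ :
            Z s p ⧸ ((N s p).comap (Z s p).subtype)) ∈ LinearMap.ker D1),
        e (Submodule.Quotient.mk ⟨x, hx1⟩) =
          Submodule.Quotient.mk ⟨Submodule.Quotient.mk ⟨x, hx⟩, hk⟩ := by
  have hFle : ∀ {a c : ℤ}, a ≤ c → F c ≤ F a := fun h => hF h
  have hmemZ : ∀ (t : ℕ) (q : ℤ) (x : V),
      x ∈ Z t q ↔ x ∈ F q ∧ d x ∈ F (q + (t : ℤ)) := by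
    intro t q x
    rw [hZ, Submodule.mem_inf, Submodule.mem_comap]
  have hbω : ∀ (q t : ℤ), t ≤ 2 * (r : ℤ) + 1 + q → ∀ x ∈ F q, d (d x) ∈ F t := by
    intro q t ht x hx
    rw [hdd]
    exact neg_mem (hFle ht (hb _ _ ω hω x hx))
  have hmemN : ∀ (t : ℕ) (q : ℤ) (x : V), x ∈ N t q ↔
      ∃ a, (a ∈ F (q + 1) ∧ d a ∈ F (q + (t : ℤ))) ∧
        ∃ c, c ∈ F (q - (t : ℤ) + 1) ∧ d c ∈ F q ∧ x = a + d c := by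
    intro t q x
    rw [hN, Submodule.add_eq_sup, Submodule.mem_sup]
    constructor
    · rintro ⟨a, ha, w, hw, rfl⟩
      rw [Submodule.mem_inf, Submodule.mem_comap] at ha
      obtain ⟨hw1, hw2⟩ := Submodule.mem_inf.mp hw
      obtain ⟨c, hc, rfl⟩ := Submodule.mem_map.mp hw1
      exact ⟨a, ha, c, hc, hw2, rfl⟩
    · rintro ⟨a, ha, c, hc, hdc, rfl⟩
      exact ⟨a, Submodule.mem_inf.mpr ⟨ha.1, Submodule.mem_comap.mpr ha.2⟩, d c,
        Submodule.mem_inf.mpr ⟨Submodule.mem_map_of_mem hc, hdc⟩, rfl⟩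
  have hle : Z (s + 1) p ≤ Z s p := by
    intro x hx
    rw [hmemZ] at hx ⊢
    exact ⟨hx.1, hFle (by push_cast; omega) hx.2⟩
  have hdxZ : ∀ x ∈ Z s p, d x ∈ Z s (p + (s : ℤ)) := by
    intro x hx
    rw [hmemZ] at hx ⊢
    exact ⟨hx.2, hbω p _ (by omega) x hx.1⟩
  have hdyZ : ∀ y ∈ Z s (p - (s : ℤ)), d y ∈ Z s p := by
    intro y hy
    rw [hmemZ] at hy ⊢
    exact ⟨hFle (by omega) hy.2, hbω (p - (s : ℤ)) _ (by omega) y hy.1⟩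
  have hkerD1 : ∀ (x : V) (hx1 : x ∈ Z (s + 1) p) (hx : x ∈ Z s p),
      (Submodule.Quotient.mk ⟨x, hx⟩ :
        Z s p ⧸ ((N s p).comap (Z s p).subtype)) ∈ LinearMap.ker D1 := by
    intro x hx1 hx
    rw [LinearMap.mem_ker, hD1 x hx (hdxZ x hx), Submodule.Quotient.mk_eq_zero,
      Submodule.mem_comap]
    show d x ∈ N s (p + (s : ℤ))
    rw [hmemZ] at hx1
    refine (hmemN s (p + (s : ℤ)) (d x)).mpr
      ⟨d x, ⟨hFle (by push_cast; omega) hx1.2, hbω p _ (by omega) x hx1.1⟩,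
        0, zero_mem _, by rw [map_zero]; exact zero_mem _, by simp⟩
  let f0 : Z (s + 1) p →ₗ[R] (Z s p ⧸ ((N s p).comap (Z s p).subtype)) :=
    ((N s p).comap (Z s p).subtype).mkQ.comp (Submodule.inclusion hle)
  have hf0 : ∀ x : Z (s + 1) p, f0 x ∈ LinearMap.ker D1 := fun x =>
    hkerD1 x.1 x.2 (hle x.2)
  let f1 := LinearMap.codRestrict (LinearMap.ker D1) f0 hf0
  let f : Z (s + 1) p →ₗ[R]
      (LinearMap.ker D1 ⧸ ((LinearMap.range D2).comap (LinearMap.ker D1).subtype)) :=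
    ((LinearMap.range D2).comap (LinearMap.ker D1).subtype).mkQ.comp f1
  -- (N (s+1) p) maps to zero
  have hkf : (N (s + 1) p).comap (Z (s + 1) p).subtype ≤ LinearMap.ker f := by
    rintro ⟨x, hx1⟩ hxN
    rw [Submodule.mem_comap] at hxN
    have hxN' : x ∈ N (s + 1) p := hxN
    rw [LinearMap.mem_ker]
    show Submodule.Quotient.mk (f1 ⟨x, hx1⟩) = 0
    rw [Submodule.Quotient.mk_eq_zero, Submodule.mem_comap]
    show (Submodule.Quotient.mk ⟨x, hle hx1⟩ :
      Z s p ⧸ ((N s p).comap (Z s p).subtype)) ∈ LinearMap.range D2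
    obtain ⟨a, ⟨ha1, ha2⟩, c, hc, hdc, hxeq⟩ := (hmemN (s + 1) p x).mp hxN'
    have hcZ : c ∈ Z s (p - (s : ℤ)) := by
      rw [hmemZ]
      exact ⟨hFle (by push_cast; omega) hc, hFle (by omega) hdc⟩
    have hdcZ : d c ∈ Z s p := hdyZ c hcZ
    refine ⟨Submodule.Quotient.mk ⟨c, hcZ⟩, ?_⟩
    rw [hD2 c hcZ hdcZ, Submodule.Quotient.eq, Submodule.mem_comap]
    show d c - x ∈ N s p
    have hdcx : d c - x = -a := by rw [hxeq]; abel
    rw [hdcx]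
    exact neg_mem ((hmemN s p a).mpr ⟨a, ⟨ha1, hFle (by push_cast; omega) ha2⟩,
      0, zero_mem _, by rw [map_zero]; exact zero_mem _, by simp⟩)
  -- kernel of f is exactly N (s+1) p
  have hfk : LinearMap.ker f ≤ (N (s + 1) p).comap (Z (s + 1) p).subtype := by
    rintro ⟨x, hx1⟩ hxf
    rw [LinearMap.mem_ker] at hxf
    have hmem : f1 ⟨x, hx1⟩ ∈ (LinearMap.range D2).comap (LinearMap.ker D1).subtype := by
      rw [← Submodule.Quotient.mk_eq_zero]
      exact hxf
    rw [Submodule.mem_comap] at hmem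
    have hrange : (Submodule.Quotient.mk ⟨x, hle hx1⟩ :
        Z s p ⧸ ((N s p).comap (Z s p).subtype)) ∈ LinearMap.range D2 := hmem
    obtain ⟨ybar, hy⟩ := hrange
    obtain ⟨⟨y, hyZ⟩, rfl⟩ := Submodule.Quotient.mk_surjective _ ybar
    have hdyZ' : d y ∈ Z s p := hdyZ y hyZ
    rw [hD2 y hyZ hdyZ', Submodule.Quotient.eq, Submodule.mem_comap] at hy
    have hy' : d y - x ∈ N s p := hy
    have hy'' : x - d y ∈ N s p := by
      have := neg_mem hy'
      rwa [neg_sub] at this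
    obtain ⟨a, ⟨ha1, ha2⟩, c, hc, hdc, heq⟩ := (hmemN s p (x - d y)).mp hy''
    rw [Submodule.mem_comap]
    show x ∈ N (s + 1) p
    have hyF : y ∈ F (p - (s : ℤ)) := ((hmemZ s (p - (s : ℤ)) y).mp hyZ).1
    have hycF' : y + c ∈ F (p - (s : ℤ)) := add_mem hyF (hFle (by omega) hc)
    have hycF : y + c ∈ F (p - ((s + 1 : ℕ) : ℤ) + 1) := by
      have hcast : p - ((s + 1 : ℕ) : ℤ) + 1 = p - (s : ℤ) := by push_cast; ring
      rw [hcast]; exact hycF'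
    have ha' : a = x - d (y + c) := by
      rw [map_add]
      have h1 : a = (x - d y) - d c := by rw [heq]; abel
      rw [h1]; abel
    have hx1' := (hmemZ (s + 1) p x).mp hx1
    have hda : d a ∈ F (p + ((s + 1 : ℕ) : ℤ)) := by
      have h2 : d a = d x - d (d (y + c)) := by rw [ha', map_sub]
      rw [h2]
      exact sub_mem hx1'.2 (hbω (p - (s : ℤ)) _ (by push_cast; omega) (y + c) hycF')
    have hdyc : d (y + c) ∈ F p := by
      have h3 : d (y + c) = x - a := by rw [ha']; abel
      rw [h3]
      exact sub_mem hx1'.1 (hFle (by omega) ha1)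
    exact (hmemN (s + 1) p x).mpr ⟨a, ⟨ha1, hda⟩, y + c, hycF, hdyc, by rw [ha']; abel⟩
  let e0 := Submodule.liftQ ((N (s + 1) p).comap (Z (s + 1) p).subtype) f hkf
  have hinj : Function.Injective e0 := by
    rw [← LinearMap.ker_eq_bot]
    exact Submodule.ker_liftQ_eq_bot _ _ _ hfk
  have hsurj : Function.Surjective e0 := by
    intro t
    obtain ⟨k, rfl⟩ := Submodule.Quotient.mk_surjective _ t
    obtain ⟨zbar, hzk⟩ := k
    obtain ⟨⟨x, hx⟩, rfl⟩ := Submodule.Quotient.mk_surjective _ zbar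
    have hdx : d x ∈ Z s (p + (s : ℤ)) := hdxZ x hx
    have h0 : d x ∈ N s (p + (s : ℤ)) := by
      have h := hzk
      rw [LinearMap.mem_ker, hD1 x hx hdx, Submodule.Quotient.mk_eq_zero,
        Submodule.mem_comap] at h
      exact h
    obtain ⟨a, ⟨ha1, ha2⟩, u, hu, hdu, heq⟩ := (hmemN s (p + (s : ℤ)) (d x)).mp h0
    have huF : u ∈ F (p + 1) := hFle (by omega) hu
    have hx' : x - u ∈ Z (s + 1) p := by
      rw [hmemZ]
      constructor
      · exact sub_mem ((hmemZ s p x).mp hx).1 (hFle (by omega) huF)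
      · rw [map_sub]
        have h4 : d x - d u = a := by rw [heq]; abel
        rw [h4]
        exact hFle (by push_cast; omega) ha1
    refine ⟨Submodule.Quotient.mk ⟨x - u, hx'⟩, ?_⟩
    rw [Submodule.liftQ_apply]
    show Submodule.Quotient.mk (f1 ⟨x - u, hx'⟩) =
      Submodule.Quotient.mk ⟨Submodule.Quotient.mk ⟨x, hx⟩, hzk⟩
    have hval : f1 ⟨x - u, hx'⟩ = ⟨Submodule.Quotient.mk ⟨x, hx⟩, hzk⟩ := by
      apply Subtype.ext
      show (Submodule.Quotient.mk ⟨x - u, hle hx'⟩ :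
        Z s p ⧸ ((N s p).comap (Z s p).subtype)) = Submodule.Quotient.mk ⟨x, hx⟩
      rw [Submodule.Quotient.eq, Submodule.mem_comap]
      show (x - u) - x ∈ N s p
      have h5 : (x - u) - x = -u := by abel
      rw [h5]
      exact neg_mem ((hmemN s p u).mpr ⟨u, ⟨huF, hdu⟩, 0, zero_mem _,
        by rw [map_zero]; exact zero_mem _, by simp⟩)
    rw [hval]
  refine ⟨LinearEquiv.ofBijective e0 ⟨hinj, hsurj⟩, ?_⟩
  intro x hx1 hx hk
  show e0 (Submodule.Quotient.mk ⟨x, hx1⟩) = _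
  rw [Submodule.liftQ_apply]
  show Submodule.Quotient.mk (f1 ⟨x, hx1⟩) =
    Submodule.Quotient.mk ⟨Submodule.Quotient.mk ⟨x, hx⟩, hk⟩
  rfl
end

section
/- For every integer p the following are equivalent: (i) for every z ∈ F p with d z ∈ F (p + r + 1) there exists y ∈ F (p − r) with d y ∈ F p and z − d y ∈ F (p + 1); (ii) for every z ∈ F p with d' z ∈ F (p + r + 1) there exists y ∈ F (p − r) with d' y ∈ F p and z − d' y ∈ F (p + 1). (This is the key to the fact that twisting a filtered curved L∞-algebra by an element of filtration degree r + 1 — which perturbs the differential by a map raising filtration degree by r + 1 — preserves the vanishing of the (r+1)-st page of the spectral sequence.) -/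
private lemma aux_one_dir
    {R V : Type*} [CommRing R] [AddCommGroup V] [Module R V]
    (F : ℤ → Submodule R V) (hF : Antitone F)
    (r : ℕ) (d d' : V →ₗ[R] V)
    (hd : ∀ (p : ℤ), ∀ x ∈ F p, d x ∈ F p)
    (hdd' : ∀ (p : ℤ), ∀ x ∈ F p, d' x - d x ∈ F (p + (r : ℤ) + 1))
    (p : ℤ)
    (h : ∀ z ∈ F p, d z ∈ F (p + (r : ℤ) + 1) →
        ∃ y ∈ F (p - (r : ℤ)), d y ∈ F p ∧ z - d y ∈ F (p + 1)) :
    ∀ z ∈ F p, d' z ∈ F (p + (r : ℤ) + 1) →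
        ∃ y ∈ F (p - (r : ℤ)), d' y ∈ F p ∧ z - d' y ∈ F (p + 1) := by
  intro z hz hz'
  have hdz : d z ∈ F (p + (r : ℤ) + 1) := by
    have := hdd' p z hz
    have : d' z - (d' z - d z) ∈ F (p + (r : ℤ) + 1) := sub_mem hz' this
    simpa using this
  obtain ⟨y, hy, hdy, hzy⟩ := h z hz hdz
  have hdiff : d' y - d y ∈ F (p + 1) := by
    have := hdd' (p - (r : ℤ)) y hy
    have he : p - (r : ℤ) + (r : ℤ) + 1 = p + 1 := by ring
    rwa [he] at this
  refine ⟨y, hy, ?_, ?_⟩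
  · have : d y + (d' y - d y) ∈ F p :=
      add_mem hdy (hF (by omega) hdiff)
    simpa using this
  · have : (z - d y) - (d' y - d y) ∈ F (p + 1) := sub_mem hzy hdiff
    have he : (z - d y) - (d' y - d y) = z - d' y := by abel
    rwa [he] at this

/-- Let `F` be a descending filtration on `V` with `F j = ⊤` for `j ≤ 1`,
and let `d, d'` be linear maps preserving the filtration such that `d' x - d x ∈ F (p + r + 1)`
for all `x ∈ F p`.  Then for every `p : ℤ` the vanishing condition for the `(r+1)`-st page
holds for `d` iff it holds for `d'`: twisting by an element of filtration degree `r + 1`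
preserves the vanishing of the `(r+1)`-st page of the spectral sequence. -/
theorem spectral_page_vanishing_perturbation_invariant
    {R V : Type*} [CommRing R] [AddCommGroup V] [Module R V]
    (F : ℤ → Submodule R V) (hF : Antitone F)
    (hFtop : ∀ j : ℤ, j ≤ 1 → F j = ⊤)
    (r : ℕ)
    (d d' : V →ₗ[R] V)
    (hd : ∀ (p : ℤ), ∀ x ∈ F p, d x ∈ F p)
    (hdd' : ∀ (p : ℤ), ∀ x ∈ F p, d' x - d x ∈ F (p + (r : ℤ) + 1)) :
    ∀ p : ℤ,
      (∀ z ∈ F p, d z ∈ F (p + (r : ℤ) + 1) →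
          ∃ y ∈ F (p - (r : ℤ)), d y ∈ F p ∧ z - d y ∈ F (p + 1)) ↔
      (∀ z ∈ F p, d' z ∈ F (p + (r : ℤ) + 1) →
          ∃ y ∈ F (p - (r : ℤ)), d' y ∈ F p ∧ z - d' y ∈ F (p + 1)) := by
  have hd' : ∀ (p : ℤ), ∀ x ∈ F p, d' x ∈ F p := by
    intro p x hx
    have : d x + (d' x - d x) ∈ F p :=
      add_mem (hd p x hx) (hF (by omega) (hdd' p x hx))
    simpa using this
  have hdd'' : ∀ (p : ℤ), ∀ x ∈ F p, d x - d' x ∈ F (p + (r : ℤ) + 1) := by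
    intro p x hx
    simpa using neg_mem (hdd' p x hx)
  intro p
  exact ⟨aux_one_dir F hF r d d' hd hdd' p,
         aux_one_dir F hF r d' d hd' hdd'' p⟩
end

section
/- Let r ∈ ℕ and let k ≥ 2r + 1 be an integer such that ω ∈ F k (V 2), and assume the following vanishing condition (vanishing of the (r+1)-st page of the spectral sequence in total degree 2): for every integer p and every z ∈ F p (V 2) with d z ∈ F (p + r + 1) (V 3), there exists y ∈ F (p − r) (V 1) with d y ∈ F p (V 2) and z − d y ∈ F (p + 1) (V 2). Then there exists α ∈ F (k − r) (V 1) such that ω − d α ∈ F (k + 1) (V 2) and moreover the curvature of the twist by −α satisfies ω − d α + (1/2)•⁅α, α⁆ ∈ F (k + 1) (V 2). (Curved differential graded Lie algebra case of the lemma producing a twist that raises the filtration degree of the curvature by one.) -/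
/-- Transport an element of a `ℤ`-graded family along an equality of degrees. -/
def gcast {V : ℤ → Type*} {m n : ℤ} (h : m = n) (x : V m) : V n := h ▸ x


theorem gcast_mem {K : Type*} [Field K] {V : ℤ → Type*} [∀ n, AddCommGroup (V n)]
    [∀ n, Module K (V n)] {F : ℤ → ∀ n : ℤ, Submodule K (V n)} {p m n : ℤ} (h : m = n)
    {x : V m} (hx : x ∈ F p m) : gcast (V := V) h x ∈ F p n := by
  subst h; exact hx

/-- Let `(V, d, ⁅·,·⁆, ω)` be a curved differential graded Lie algebra over a
field `K` of characteristic `0` with a compatible descending filtration `F` (with `F j = ⊤`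
for `j ≤ 1`).  Let `r ∈ ℕ` and `k ≥ 2r + 1` with `ω ∈ F k (V 2)`, and assume the vanishing
of the `(r+1)`-st page of the spectral sequence in total degree 2: for every `p : ℤ` and
`z ∈ F p (V 2)` with `d z ∈ F (p + r + 1) (V 3)` there is `y ∈ F (p - r) (V 1)` with
`d y ∈ F p (V 2)` and `z - d y ∈ F (p + 1) (V 2)`.  Then there is `α ∈ F (k - r) (V 1)` with
`ω - d α ∈ F (k + 1) (V 2)`, and the curvature of the twist by `-α` satisfies
`ω - d α + (1/2) • ⁅α, α⁆ ∈ F (k + 1) (V 2)`. -/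
theorem twist_raising_filtration_of_curvature
    {K : Type*} [Field K] [CharZero K]
    (V : ℤ → Type*) [∀ n, AddCommGroup (V n)] [∀ n, Module K (V n)]
    (d : ∀ n : ℤ, V n →ₗ[K] V (n + 1))
    (br : ∀ m n : ℤ, V m →ₗ[K] V n →ₗ[K] V (m + n))
    (ω : V 2)
    (hanti : ∀ (m n : ℤ) (x : V m) (y : V n),
      br m n x y = - (-1 : K) ^ (m * n) • gcast (V := V) (add_comm n m) (br n m y x))
    (hjac : ∀ (m n k : ℤ) (x : V m) (y : V n) (z : V k),
      br m (n + k) x (br n k y z)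
        = gcast (V := V) (show m + n + k = m + (n + k) by ring) (br (m + n) k (br m n x y) z)
          + (-1 : K) ^ (m * n) •
            gcast (V := V) (show n + (m + k) = m + (n + k) by ring) (br n (m + k) y (br m k x z)))
    (hleib : ∀ (m n : ℤ) (x : V m) (y : V n),
      d (m + n) (br m n x y)
        = gcast (V := V) (show m + 1 + n = m + n + 1 by ring) (br (m + 1) n (d m x) y)
          + (-1 : K) ^ m •
            gcast (V := V) (show m + (n + 1) = m + n + 1 by ring) (br m (n + 1) x (d n y)))
    (hdω : d 2 ω = 0)
    (hdd : ∀ (n : ℤ) (x : V n),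
      d (n + 1) (d n x) = gcast (V := V) (show (2 : ℤ) + n = n + 1 + 1 by ring) (br 2 n ω x))
    (F : ℤ → ∀ n : ℤ, Submodule K (V n))
    (hFanti : ∀ p q : ℤ, p ≤ q → ∀ n : ℤ, F q n ≤ F p n)
    (hFtop : ∀ j : ℤ, j ≤ 1 → ∀ n : ℤ, F j n = ⊤)
    (hFd : ∀ (p n : ℤ), ∀ x ∈ F p n, d n x ∈ F p (n + 1))
    (hFbr : ∀ (p q m n : ℤ), ∀ x ∈ F p m, ∀ y ∈ F q n, br m n x y ∈ F (p + q) (m + n))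
    (r : ℕ) (k : ℤ) (hk : 2 * (r : ℤ) + 1 ≤ k)
    (hωF : ω ∈ F k 2)
    (hvan : ∀ (p : ℤ), ∀ z ∈ F p 2, d 2 z ∈ F (p + (r : ℤ) + 1) (2 + 1) →
      ∃ y ∈ F (p - (r : ℤ)) 1,
        gcast (V := V) (show (1 : ℤ) + 1 = 2 by norm_num) (d 1 y) ∈ F p 2 ∧
        z - gcast (V := V) (show (1 : ℤ) + 1 = 2 by norm_num) (d 1 y) ∈ F (p + 1) 2) :
    ∃ α ∈ F (k - (r : ℤ)) 1,
      ω - gcast (V := V) (show (1 : ℤ) + 1 = 2 by norm_num) (d 1 α) ∈ F (k + 1) 2 ∧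
      ω - gcast (V := V) (show (1 : ℤ) + 1 = 2 by norm_num) (d 1 α)
          + (2⁻¹ : K) • gcast (V := V) (show (1 : ℤ) + 1 = 2 by norm_num) (br 1 1 α α)
        ∈ F (k + 1) 2 := by
  obtain ⟨α, hα, hdα, hωdα⟩ := hvan k ω hωF (by rw [hdω]; exact Submodule.zero_mem _)
  refine ⟨α, hα, hωdα, Submodule.add_mem _ hωdα ?_⟩
  refine Submodule.smul_mem _ _ ?_
  refine hFanti _ _ ?_ _ (gcast_mem _ (hFbr _ _ _ _ α hα α hα))
  omega
end

section
/- Suppose the filtration is complete in each degree: for every n ∈ ℤ and every sequence (x_p)_{p ∈ ℕ} in V n with x_{p+1} − x_p ∈ F p (V n) for all p there exists x ∈ V n with x − x_p ∈ F p (V n) for all p, and moreover ⋂_{p ∈ ℤ} F p (V n) = {0}. Let r ∈ ℕ, assume ω ∈ F (2r + 1) (V 2), and assume the following vanishing condition (vanishing of the (r+1)-st page of the spectral sequence in total degree 2): for every integer p and every z ∈ F p (V 2) with d z ∈ F (p + r + 1) (V 3), there exists y ∈ F (p − r) (V 1) with d y ∈ F p (V 2) and z − d y ∈ F (p + 1)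 (V 2). Then there exists a Maurer–Cartan element α ∈ F (r + 1) (V 1), i.e. an element satisfying ω + d α + (1/2)•⁅α, α⁆ = 0. (This is the main obstruction theorem of the paper in the case of curved differential graded Lie algebras; equivalently, the twist of the curved dg Lie algebra by α is flat.) -/
section
set_option linter.unusedSectionVars false
variable {K : Type*} [Field K] {V : ℤ → Type*} [∀ n, AddCommGroup (V n)] [∀ n, Module K (V n)]

theorem gcast_refl {n : ℤ} (h : n = n) (x : V n) : gcast h x = x := rfl

theorem gcast_gcast {m n k : ℤ} (h : m = n) (h' : n = k) (x : V m) :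
    gcast h' (gcast (V := V) h x) = gcast (h.trans h') x := by subst h; rfl

theorem gcast_add {m n : ℤ} (h : m = n) (x y : V m) :
    gcast h (x + y) = gcast h x + gcast h y := by subst h; rfl

theorem gcast_sub {m n : ℤ} (h : m = n) (x y : V m) :
    gcast h (x - y) = gcast h x - gcast h y := by subst h; rfl

theorem gcast_neg {m n : ℤ} (h : m = n) (x : V m) :
    gcast h (-x) = - gcast h x := by subst h; rfl

theorem gcast_zero {m n : ℤ} (h : m = n) : gcast (V := V) h (0 : V m) = 0 := by subst h; rfl

theorem gcast_smul {m n : ℤ} (h : m = n) (c : K) (x : V m) :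
    gcast h (c • x) = c • gcast h x := by subst h; rfl

theorem gcast_mem_s9 {m n : ℤ} (h : m = n) (G : ∀ n : ℤ, Submodule K (V n)) (x : V m) :
    gcast h x ∈ G n ↔ x ∈ G m := by subst h; rfl
end

/-- **main obstruction theorem, curved dg Lie algebra case.**
Let `(V, d, ⁅·,·⁆, ω)` be a curved differential graded Lie algebra over a field `K` of
characteristic `0` with a compatible descending filtration `F` (with `F j = ⊤` for `j ≤ 1`)
which is complete and Hausdorff in every degree.  Let `r ∈ ℕ`, assume `ω ∈ F (2r+1) (V 2)`
and assume the vanishing of the `(r+1)`-st page of the spectral sequence in total degree 2: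
for every `p : ℤ` and `z ∈ F p (V 2)` with `d z ∈ F (p + r + 1) (V 3)` there is
`y ∈ F (p - r) (V 1)` with `d y ∈ F p (V 2)` and `z - d y ∈ F (p + 1) (V 2)`.  Then there
exists a Maurer–Cartan element `α ∈ F (r + 1) (V 1)`:
`ω + d α + (1/2) • ⁅α, α⁆ = 0`. -/
theorem exists_maurer_cartan_of_page_vanishing
    {K : Type*} [Field K] [CharZero K]
    (V : ℤ → Type*) [∀ n, AddCommGroup (V n)] [∀ n, Module K (V n)]
    (d : ∀ n : ℤ, V n →ₗ[K] V (n + 1))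
    (br : ∀ m n : ℤ, V m →ₗ[K] V n →ₗ[K] V (m + n))
    (ω : V 2)
    (hanti : ∀ (m n : ℤ) (x : V m) (y : V n),
      br m n x y = - (-1 : K) ^ (m * n) • gcast (V := V) (add_comm n m) (br n m y x))
    (hjac : ∀ (m n k : ℤ) (x : V m) (y : V n) (z : V k),
      br m (n + k) x (br n k y z)
        = gcast (V := V) (show m + n + k = m + (n + k) by ring) (br (m + n) k (br m n x y) z)
          + (-1 : K) ^ (m * n) •
            gcast (V := V) (show n + (m + k) = m + (n + k) by ring) (br n (m + k) y (br m k x z)))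
    (hleib : ∀ (m n : ℤ) (x : V m) (y : V n),
      d (m + n) (br m n x y)
        = gcast (V := V) (show m + 1 + n = m + n + 1 by ring) (br (m + 1) n (d m x) y)
          + (-1 : K) ^ m •
            gcast (V := V) (show m + (n + 1) = m + n + 1 by ring) (br m (n + 1) x (d n y)))
    (hdω : d 2 ω = 0)
    (hdd : ∀ (n : ℤ) (x : V n),
      d (n + 1) (d n x) = gcast (V := V) (show (2 : ℤ) + n = n + 1 + 1 by ring) (br 2 n ω x))
    (F : ℤ → ∀ n : ℤ, Submodule K (V n))
    (hFanti : ∀ p q : ℤ, p ≤ q → ∀ n : ℤ, F q n ≤ F p n)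
    (hFtop : ∀ j : ℤ, j ≤ 1 → ∀ n : ℤ, F j n = ⊤)
    (hFd : ∀ (p n : ℤ), ∀ x ∈ F p n, d n x ∈ F p (n + 1))
    (hFbr : ∀ (p q m n : ℤ), ∀ x ∈ F p m, ∀ y ∈ F q n, br m n x y ∈ F (p + q) (m + n))
    (hcomplete : ∀ (n : ℤ) (x : ℕ → V n),
      (∀ p : ℕ, x (p + 1) - x p ∈ F (p : ℤ) n) →
      ∃ l : V n, ∀ p : ℕ, l - x p ∈ F (p : ℤ) n)
    (hhaus : ∀ (n : ℤ) (v : V n), (∀ p : ℤ, v ∈ F p n) → v = 0)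
    (r : ℕ)
    (hωF : ω ∈ F (2 * (r : ℤ) + 1) 2)
    (hvan : ∀ (p : ℤ), ∀ z ∈ F p 2, d 2 z ∈ F (p + (r : ℤ) + 1) (2 + 1) →
      ∃ y ∈ F (p - (r : ℤ)) 1,
        gcast (V := V) (show (1 : ℤ) + 1 = 2 by norm_num) (d 1 y) ∈ F p 2 ∧
        z - gcast (V := V) (show (1 : ℤ) + 1 = 2 by norm_num) (d 1 y) ∈ F (p + 1) 2) :
    ∃ α ∈ F ((r : ℤ) + 1) 1,
      ω + gcast (V := V) (show (1 : ℤ) + 1 = 2 by norm_num) (d 1 α)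
        + (2⁻¹ : K) • gcast (V := V) (show (1 : ℤ) + 1 = 2 by norm_num) (br 1 1 α α) = 0 := by
  classical
  have h11 : (1:ℤ) + 1 = 2 := by norm_num
  have h12 : (1:ℤ) + 2 = 2 + 1 := by norm_num
  have gcd : ∀ (m n : ℤ) (h : m = n) (x : V m),
      d n (gcast h x) = gcast (congrArg (· + 1) h) (d m x) := by
    intro m n h x; subst h; rfl
  have gbl : ∀ (m m' n : ℤ) (h : m = m') (x : V m) (y : V n),
      br m' n (gcast h x) y = gcast (congrArg (· + n) h) (br m n x y) := by
    intro m m' n h x y; subst h; rfl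
  have gbr : ∀ (m n n' : ℤ) (h : n = n') (x : V m) (y : V n),
      br m n' x (gcast h y) = gcast (congrArg (m + ·) h) (br m n x y) := by
    intro m n n' h x y; subst h; rfl
  have e11 : ((-1:K)) ^ ((1:ℤ)*(1:ℤ)) = -1 := by norm_num
  have e21 : ((-1:K)) ^ ((2:ℤ)*(1:ℤ)) = 1 := by norm_num
  have e1 : ((-1:K)) ^ ((1:ℤ)) = -1 := by norm_num
  have eA : ((-1:K)) ^ (((1:ℤ)+1)*(1:ℤ)) = 1 := by norm_num
  have brsymm : ∀ x y : V 1, br 1 1 x y = br 1 1 y x := by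
    intro x y
    rw [hanti 1 1 x y, gcast_refl, e11]
    norm_num
  have jac0 : ∀ a : V 1, br 1 (1+1) a (br 1 1 a a) = 0 := by
    intro a
    have hJ := hjac 1 1 1 a a a
    rw [hanti (1+1) 1 (br 1 1 a a) a, gcast_smul, gcast_gcast, gcast_refl,
        e11, eA] at hJ
    set J := br 1 (1+1) a (br 1 1 a a) with hJdef
    have h3 : (3:K) • J = 0 := by
      rw [show (3:K) = 1+1+1 by norm_num, add_smul, add_smul, one_smul]
      nth_rewrite 1 [hJ]
      simp only [neg_smul, one_smul]
      abel
    exact (smul_eq_zero.mp h3).resolve_left (by norm_num)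
  set κ : V 1 → V 2 := fun a =>
    ω + gcast h11 (d 1 a) + (2⁻¹:K) • gcast h11 (br 1 1 a a) with hκ
  have bianchi : ∀ a : V 1, d 2 (κ a) = - gcast h12 (br 1 2 a (κ a)) := by
    intro a
    show d 2 (ω + gcast h11 (d 1 a) + (2⁻¹:K) • gcast h11 (br 1 1 a a)) = _
    rw [map_add, map_add, map_smul, hdω, gcd _ _ h11, gcd _ _ h11, hdd 1 a,
        gcast_gcast, gcast_refl, hleib 1 1 a a, gcast_add, gcast_smul, gcast_gcast,
        gcast_gcast, hanti (1+1) 1 (d 1 a) a, hanti 2 1 ω a,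
        gcast_smul, gcast_gcast, e1, eA, e21]
    rw [hκ]
    simp only [map_add, map_smul, gbr 1 (1+1) 2 h11, gcast_add, gcast_smul, gcast_gcast,
      gcast_neg, jac0 a, gcast_zero, smul_zero, add_zero]
    module
  -- difference formula for κ
  have κdiff : ∀ x y : V 1, κ x - κ y
      = gcast h11 (d 1 (x - y)) + (2⁻¹:K) •
        (gcast h11 (br 1 1 (x - y) x) + gcast h11 (br 1 1 y (x - y))) := by
    intro x y
    rw [hκ]
    simp only [map_sub, LinearMap.sub_apply, gcast_sub, gcast_add]
    module
  have κsub : ∀ a y : V 1, κ (a - y)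
      = κ a - gcast h11 (d 1 y) - gcast h11 (br 1 1 a y)
        + (2⁻¹:K) • gcast h11 (br 1 1 y y) := by
    intro a y
    rw [hκ]
    simp only [map_sub, LinearMap.sub_apply, gcast_sub, gcast_add]
    rw [brsymm y a]
    module
  -- the inductive step
  have step : ∀ (p : ℕ) (a : V 1), a ∈ F ((r:ℤ)+1) 1 → κ a ∈ F (2*(r:ℤ)+1+(p:ℤ)) 2 →
      ∃ b : V 1, b - a ∈ F ((r:ℤ)+1+(p:ℤ)) 1 ∧ b ∈ F ((r:ℤ)+1) 1 ∧
        κ b ∈ F (2*(r:ℤ)+1+(p:ℤ)+1) 2 := by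
    intro p a ha hκa
    have hdκ : d 2 (κ a) ∈ F ((2*(r:ℤ)+1+(p:ℤ)) + (r:ℤ) + 1) (2+1) := by
      rw [bianchi a]
      refine neg_mem ?_
      rw [gcast_mem_s9]
      refine hFanti _ _ (le_of_eq (by ring)) _
        (hFbr ((r:ℤ)+1) (2*(r:ℤ)+1+(p:ℤ)) 1 2 a ha (κ a) hκa)
    obtain ⟨y, hy, hdy, hzy⟩ := hvan (2*(r:ℤ)+1+(p:ℤ)) (κ a) hκa hdκ
    have hyF : y ∈ F ((r:ℤ)+1+(p:ℤ)) 1 := by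
      refine hFanti _ _ (le_of_eq (by ring)) _ hy
    refine ⟨a - y, ?_, ?_, ?_⟩
    · have h1 : a - y - a = -y := by abel
      rw [h1]
      exact neg_mem hyF
    · exact sub_mem ha (hFanti _ _ (by omega) _ hyF)
    · rw [κsub a y]
      have t1 : κ a - gcast h11 (d 1 y) ∈ F (2*(r:ℤ)+1+(p:ℤ)+1) 2 := hzy
      have t2 : gcast h11 (br 1 1 a y) ∈ F (2*(r:ℤ)+1+(p:ℤ)+1) 2 := by
        rw [gcast_mem_s9]
        exact hFanti _ _ (le_of_eq (by ring)) _ (hFbr ((r:ℤ)+1) ((r:ℤ)+1+(p:ℤ)) 1 1 a ha y hyF)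
      have t3 : gcast h11 (br 1 1 y y) ∈ F (2*(r:ℤ)+1+(p:ℤ)+1) 2 := by
        rw [gcast_mem_s9]
        exact hFanti _ _ (by omega) _ (hFbr ((r:ℤ)+1+(p:ℤ)) ((r:ℤ)+1+(p:ℤ)) 1 1 y hyF y hyF)
      exact add_mem (sub_mem t1 t2) (Submodule.smul_mem _ _ t3)
  choose f hf1 hf2 hf3 using step
  have hbase2 : κ 0 ∈ F (2*(r:ℤ)+1+((0:ℕ):ℤ)) 2 := by
    have hκ0 : κ 0 = ω := by
      rw [hκ]
      simp [gcast_zero]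
    rw [hκ0]
    exact hFanti _ _ (by simp) _ hωF
  let g : ∀ p : ℕ, {a : V 1 // a ∈ F ((r:ℤ)+1) 1 ∧ κ a ∈ F (2*(r:ℤ)+1+(p:ℤ)) 2} :=
    fun p => Nat.rec ⟨0, zero_mem _, hbase2⟩
      (fun p ih => ⟨f p ih.1 ih.2.1 ih.2.2, hf2 p ih.1 ih.2.1 ih.2.2, by
        have h := hf3 p ih.1 ih.2.1 ih.2.2
        have : (((p+1:ℕ)):ℤ) = (p:ℤ)+1 := by push_cast; ring
        rw [show (2*(r:ℤ)+1+((p+1:ℕ):ℤ)) = 2*(r:ℤ)+1+(p:ℤ)+1 by push_cast; ring]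
        exact h⟩) p
  have gdiff : ∀ p : ℕ, (g (p+1)).1 - (g p).1 ∈ F ((r:ℤ)+1+(p:ℤ)) 1 :=
    fun p => hf1 p (g p).1 (g p).2.1 (g p).2.2
  obtain ⟨l, hl⟩ := hcomplete 1 (fun p => (g p).1)
    (fun p => hFanti _ _ (by omega) 1 (gdiff p))
  have hlF : l ∈ F ((r:ℤ)+1) 1 := by
    have h1 := (g (r+1)).2.1
    have h2 : l - (g (r+1)).1 ∈ F ((r:ℤ)+1) 1 :=
      hFanti _ _ (by push_cast; omega) 1 (hl (r+1))
    have h3 := add_mem h1 h2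
    simpa using h3
  have hl1 : l ∈ F 1 1 := by rw [hFtop 1 le_rfl 1]; trivial
  have hκl : ∀ s : ℤ, κ l ∈ F s 2 := by
    intro s
    refine hFanti s (s.toNat) (Int.self_le_toNat s) 2 ?_
    set p : ℕ := s.toNat
    have hd : l - (g p).1 ∈ F (p:ℤ) 1 := hl p
    have hg1 : (g p).1 ∈ F 1 1 := by rw [hFtop 1 le_rfl 1]; trivial
    have hm : κ l - κ (g p).1 ∈ F (p:ℤ) 2 := by
      rw [κdiff]
      refine add_mem ?_ (Submodule.smul_mem _ _ (add_mem ?_ ?_))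
      · rw [gcast_mem_s9]; exact hFd _ 1 _ hd
      · rw [gcast_mem_s9]
        exact hFanti _ _ (by omega) _ (hFbr (p:ℤ) 1 1 1 _ hd _ hl1)
      · rw [gcast_mem_s9]
        exact hFanti _ _ (by omega) _ (hFbr 1 (p:ℤ) 1 1 _ hg1 _ hd)
    have hκp : κ (g p).1 ∈ F (p:ℤ) 2 := hFanti _ _ (by omega) 2 (g p).2.2
    have h3 := add_mem hκp hm
    simpa using h3
  have h0 : κ l = 0 := hhaus 2 (κ l) hκl
  exact ⟨l, hlF, h0⟩
end
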